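/- arXiv:1908.07941 — 3 statements merged into one kernel-verified Lean document; each statement's English description precedes it below -/
import Mathlib

section
/- Let d ≥ 1 and let Θ ⊆ Ω_{⟨d]} be any set of compositions that contains the one-entry composition (d). Then the space 𝒫_d^Θ is contractible. In particular, 𝒫_d^Θ is contractible for every nonempty closed Θ ⊆ Ω_{⟨d]}. -/
open Polynomial

/-- The monic real polynomial `x^d + a_{d-1}x^{d-1} + ⋯ + a_0` determined by the
coefficient vector `a : Fin d → ℝ`.  The space `𝒫_d` of monic real degree-`d`
polynomials is modelled as the euclidean space `Fin d → ℝ` of coefficient vectors. -/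
noncomputable def monicPoly (d : ℕ) (a : Fin d → ℝ) : Polynomial ℝ :=
  X ^ d + ∑ i : Fin d, C (a i) * X ^ (i : ℕ)

/-- `P` has real root multiplicity pattern `ω`: there is a strictly increasing list `xs`
of real numbers whose members are exactly the real roots of `P`, and the corresponding
list of root multiplicities is `ω`. -/
def HasPattern (P : Polynomial ℝ) (ω : List ℕ) : Prop :=
  ∃ xs : List ℝ, xs.Pairwise (· < ·) ∧ (∀ x : ℝ, P.IsRoot x ↔ x ∈ xs) ∧
    List.Forall₂ (fun x m => rootMultiplicity x P = m) xs ω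

/-- `Ω_{⟨d]}`: compositions (lists of positive integers) `ω` with `|ω| ≤ d` and
`|ω| ≡ d (mod 2)`. -/
def OmegaLe (d : ℕ) : Set (List ℕ) :=
  {ω | (∀ m ∈ ω, 0 < m) ∧ ω.sum ≤ d ∧ ω.sum % 2 = d % 2}

/-- `Ω_{⟨d], ≥ k}`: those `ω ∈ Ω_{⟨d]}` with `|ω|' = |ω| - ℓ(ω) ≥ k`. -/
def OmegaGe (d k : ℕ) : Set (List ℕ) :=
  {ω | ω ∈ OmegaLe d ∧ k ≤ ω.sum - ω.length}

/-- The stratum `𝒫_d^ω` of monic degree-`d` polynomials with real root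
multiplicity pattern `ω` (as a set of coefficient vectors). -/
def Pstrat (d : ℕ) (ω : List ℕ) : Set (Fin d → ℝ) :=
  {a | HasPattern (monicPoly d a) ω}

/-- `𝒫_d^Θ = ⋃_{ω ∈ Θ} 𝒫_d^ω`. -/
def PTheta (d : ℕ) (Θ : Set (List ℕ)) : Set (Fin d → ℝ) :=
  {a | ∃ ω ∈ Θ, HasPattern (monicPoly d a) ω}

/-- `𝒫_d^{cΘ} = 𝒫_d ∖ 𝒫_d^Θ`. -/
def PcTheta (d : ℕ) (Θ : Set (List ℕ)) : Set (Fin d → ℝ) := (PTheta d Θ)ᶜ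

/-- One merge operation (replace two consecutive entries by their sum) or one
insertion operation (insert a new entry `2` at any position) applied to a composition. -/
inductive PatStep : List ℕ → List ℕ → Prop where
  | merge (pre post : List ℕ) (a b : ℕ) :
      PatStep (pre ++ a :: b :: post) (pre ++ (a + b) :: post)
  | insert (pre post : List ℕ) :
      PatStep (pre ++ post) (pre ++ 2 :: post)

/-- `ω' ≼ ω`: `ω'` can be obtained from `ω` by a finite (possibly empty) sequence of
merge and insertion operations. -/
def PatLe (ω' ω : List ℕ) : Prop := Relation.ReflTransGen PatStep ω ω'

/-- The composition `(1^i, 3, 1^j)`. -/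
def comp3 (i j : ℕ) : List ℕ := List.replicate i 1 ++ 3 :: List.replicate j 1

/-- The composition `(1^i, 2, 1^j, 2, 1^ℓ)`. -/
def comp22 (i j l : ℕ) : List ℕ :=
  List.replicate i 1 ++ 2 :: (List.replicate j 1 ++ 2 :: List.replicate l 1)

/-- `d(d-2)/4` for even `d`, `(d-1)²/4` for odd `d`. -/
def wedgeRank (d : ℕ) : ℕ := if Even d then d * (d - 2) / 4 else (d - 1) ^ 2 / 4

/-!
Rescaling the variable, `P(x) ↦ s^d P(x/s)` for `s > 0`, multiplies all real roots by `s` and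
keeps their order and multiplicities, so it preserves every stratum `𝒫_d^ω`. As `s → 0` it
deforms every polynomial to `x^d`, whose pattern is `(d)`; hence `𝒫_d^Θ` deformation retracts
onto the point `x^d` as soon as it contains it. If `𝒫_d^Θ` is closed and nonempty it contains
`x^d` as the limit of the rescalings of any of its members; it is nonempty because every
`ω ∈ Ω_{⟨d]}` is realised by some polynomial with prescribed real roots times `(x² + 1)^k`.
-/

lemma monic_monicPoly (d : ℕ) (a : Fin d → ℝ) : (monicPoly d a).Monic :=
  monic_X_pow_add (degree_sum_fin_lt a)

lemma natDegree_monicPoly (d : ℕ) (a : Fin d → ℝ) : (monicPoly d a).natDegree = d := by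
  rw [monicPoly, natDegree_add_eq_left_of_degree_lt, natDegree_X_pow]
  simpa only [degree_X_pow] using degree_sum_fin_lt a

lemma coeff_monicPoly (d : ℕ) (a : Fin d → ℝ) (i : Fin d) :
    (monicPoly d a).coeff i = a i := by
  simp [monicPoly, coeff_X_pow, i.is_lt.ne, Fin.val_inj]

lemma coeff_monicPoly_self (d : ℕ) (a : Fin d → ℝ) : (monicPoly d a).coeff d = 1 := by
  simpa only [natDegree_monicPoly] using (monic_monicPoly d a).coeff_natDegree

lemma monicPoly_zero (d : ℕ) : monicPoly d 0 = X ^ d := by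
  simp [monicPoly]

lemma exists_monicPoly_eq {d : ℕ} {Q : ℝ[X]} (hQ : Q.Monic) (hdeg : Q.natDegree = d) :
    ∃ a, monicPoly d a = Q := by
  refine ⟨fun i => Q.coeff i, ?_⟩
  rw [monicPoly, Fin.sum_univ_eq_sum_range (fun i => C (Q.coeff i) * X ^ i), ← hdeg,
    ← hQ.as_sum]

def rootScale (d : ℕ) (s : ℝ) (a : Fin d → ℝ) : Fin d → ℝ := fun i => s ^ (d - i) * a i

lemma monicPoly_rootScale (d : ℕ) (s : ℝ) (a : Fin d → ℝ) :
    monicPoly d (rootScale d s a) = (monicPoly d a).scaleRoots s := by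
  ext n
  rw [coeff_scaleRoots, natDegree_monicPoly]
  rcases lt_trichotomy n d with h | rfl | h
  · rw [← Fin.val_mk h, coeff_monicPoly, coeff_monicPoly, rootScale, mul_comm]
  · simp [coeff_monicPoly_self]
  · simp [coeff_eq_zero_of_natDegree_lt, natDegree_monicPoly, h]

lemma rootScale_zero (d : ℕ) (a : Fin d → ℝ) : rootScale d 0 a = 0 := by
  funext i
  simp [rootScale, Nat.sub_ne_zero_of_lt i.is_lt]

lemma rootScale_one (d : ℕ) (a : Fin d → ℝ) : rootScale d 1 a = a := by
  funext i
  simp [rootScale]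

lemma continuous_rootScale (d : ℕ) :
    Continuous fun p : ℝ × (Fin d → ℝ) => rootScale d p.1 p.2 := by
  unfold rootScale
  fun_prop

lemma hasPattern_iff {P : ℝ[X]} {ω : List ℕ} :
    HasPattern P ω ↔ ∃ xs : List ℝ, xs.Pairwise (· < ·) ∧ (∀ x, P.IsRoot x ↔ x ∈ xs) ∧
      xs.map (rootMultiplicity · P) = ω := by
  simp only [HasPattern, ← List.forall₂_eq_eq_eq, List.forall₂_map_left_iff]

lemma HasPattern.scaleRoots {P : ℝ[X]} {ω : List ℕ} (hP : P ≠ 0) {s : ℝ} (hs : 0 < s)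
    (h : HasPattern P ω) : HasPattern (P.scaleRoots s) ω := by
  rw [hasPattern_iff] at h ⊢
  obtain ⟨xs, hsort, hroot, rfl⟩ := h
  have hmult (x : ℝ) : rootMultiplicity (s * x) (P.scaleRoots s) = rootMultiplicity x P :=
    rootMultiplicity_scaleRoots P (IsRegular.of_ne_zero hs.ne').left
  refine ⟨xs.map (s * ·), hsort.map _ fun x y hxy => by gcongr, fun y => ?_, ?_⟩
  · obtain ⟨x, rfl⟩ : ∃ x, y = s * x := ⟨y / s, by field_simp⟩
    rw [← rootMultiplicity_pos (scaleRoots_ne_zero hP s), hmult, rootMultiplicity_pos hP, hroot,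
      List.mem_map_of_injective (mul_right_injective₀ hs.ne')]
  · simp [Function.comp_def, hmult]

lemma hasPattern_nil {Q : ℝ[X]} (hQ : ∀ x, ¬ Q.IsRoot x) : HasPattern Q [] :=
  ⟨[], List.Pairwise.nil, by simpa using hQ, List.Forall₂.nil⟩

lemma hasPattern_X_sub_C_pow (c : ℝ) {m : ℕ} (hm : m ≠ 0) : HasPattern ((X - C c) ^ m) [m] :=
  ⟨[c], List.pairwise_singleton _ _, fun x => by simp [sub_eq_zero, hm],
    .cons (rootMultiplicity_X_sub_C_pow c m) .nil⟩

lemma HasPattern.mul {P Q : ℝ[X]} {ω ω' : List ℕ} (hP : P ≠ 0) (hQ : Q ≠ 0)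
    (hlt : ∀ x y, P.IsRoot x → Q.IsRoot y → x < y) (h : HasPattern P ω)
    (h' : HasPattern Q ω') : HasPattern (P * Q) (ω ++ ω') := by
  rw [hasPattern_iff] at h h' ⊢
  obtain ⟨xs, hxs, hPxs, rfl⟩ := h
  obtain ⟨ys, hys, hQys, rfl⟩ := h'
  refine ⟨xs ++ ys, List.pairwise_append.2 ⟨hxs, hys, fun x hx y hy =>
    hlt x y ((hPxs x).2 hx) ((hQys y).2 hy)⟩,
    fun x => by rw [root_mul, hPxs, hQys, List.mem_append], ?_⟩
  rw [List.map_append]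
  congr 1 <;> refine List.map_congr_left fun x hx => ?_ <;>
    rw [rootMultiplicity_mul (mul_ne_zero hP hQ)]
  · have hx : P.IsRoot x := (hPxs x).2 hx
    rw [rootMultiplicity_eq_zero fun hQx => (hlt x x hx hQx).false, add_zero]
  · have hx : Q.IsRoot x := (hQys x).2 hx
    rw [rootMultiplicity_eq_zero fun hPx => (hlt x x hPx hx).false, zero_add]

lemma exists_monic_hasPattern_roots_gt {ω : List ℕ} (hω : ∀ m ∈ ω, 0 < m) (c : ℝ) :
    ∃ P : ℝ[X], P.Monic ∧ P.natDegree = ω.sum ∧ HasPattern P ω ∧ ∀ x, P.IsRoot x → c < x := by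
  induction ω generalizing c with
  | nil => exact ⟨1, monic_one, natDegree_one, hasPattern_nil (by simp), by simp⟩
  | cons m ω ih =>
    obtain ⟨P, hmon, hdeg, hpat, hroots⟩ :=
      ih (fun k hk => hω k (List.mem_cons_of_mem _ hk)) (c + 1)
    have hm : m ≠ 0 := (hω m List.mem_cons_self).ne'
    have hmon' : ((X - C (c + 1)) ^ m).Monic := (monic_X_sub_C _).pow m
    have hroot (x : ℝ) : ((X - C (c + 1)) ^ m).IsRoot x ↔ x = c + 1 := by
      simp [sub_eq_zero, hm]
    refine ⟨(X - C (c + 1)) ^ m * P, hmon'.mul hmon, ?_, ?_, fun x hx => ?_⟩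
    · rw [hmon'.natDegree_mul hmon, natDegree_pow, natDegree_X_sub_C, hdeg, List.sum_cons,
        mul_one]
    · refine (hasPattern_X_sub_C_pow (c + 1) hm).mul hmon'.ne_zero hmon.ne_zero ?_ hpat
      intro x y hx hy
      exact (hroot x).1 hx ▸ hroots y hy
    · rcases root_mul.1 hx with hx | hx
      · linarith [(hroot x).1 hx]
      · linarith [hroots x hx]

lemma exists_hasPattern_monicPoly {d : ℕ} {ω : List ℕ} (hω : ω ∈ OmegaLe d) :
    ∃ a, HasPattern (monicPoly d a) ω := by
  obtain ⟨hpos, hle, hpar⟩ := hω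
  obtain ⟨P, hmon, hdeg, hpat, -⟩ := exists_monic_hasPattern_roots_gt hpos 0
  set k := (d - ω.sum) / 2
  have hQmon : ((X ^ 2 + C 1 : ℝ[X]) ^ k).Monic := (monic_X_pow_add_C 1 two_ne_zero).pow k
  have hQroot (x : ℝ) : ¬ ((X ^ 2 + C 1 : ℝ[X]) ^ k).IsRoot x := by
    simp only [IsRoot, eval_pow, eval_add, eval_X, eval_C]
    positivity
  obtain ⟨a, ha⟩ := exists_monicPoly_eq (hmon.mul hQmon) (d := d) (by
    rw [hmon.natDegree_mul hQmon, hdeg, natDegree_pow, natDegree_X_pow_add_C]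
    omega)
  refine ⟨a, ha ▸ ?_⟩
  simpa using hpat.mul hmon.ne_zero hQmon.ne_zero (fun x y _ hy => (hQroot y hy).elim)
    (hasPattern_nil hQroot)

section PTheta

variable {d : ℕ} {Θ : Set (List ℕ)}

lemma rootScale_mem_PTheta {a : Fin d → ℝ} (ha : a ∈ PTheta d Θ) {s : ℝ} (hs : 0 < s) :
    rootScale d s a ∈ PTheta d Θ := by
  obtain ⟨ω, hω, hpat⟩ := ha
  exact ⟨ω, hω, monicPoly_rootScale d s a ▸ hpat.scaleRoots (monic_monicPoly d a).ne_zero hs⟩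

lemma zero_mem_PTheta (hd : 0 < d) (h : [d] ∈ Θ) : 0 ∈ PTheta d Θ :=
  ⟨[d], h, by simpa [monicPoly_zero] using hasPattern_X_sub_C_pow 0 hd.ne'⟩

lemma zero_mem_PTheta_of_isClosed (hcl : IsClosed (PTheta d Θ)) {a : Fin d → ℝ}
    (ha : a ∈ PTheta d Θ) : 0 ∈ PTheta d Θ := by
  have h0 : (0 : ℝ) ∈ closure (Set.Ioi 0) := by simp [closure_Ioi]
  have := map_mem_closure ((continuous_rootScale d).comp (.prodMk_left a)) h0
    fun s hs => rootScale_mem_PTheta ha hs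
  rwa [Function.comp_apply, rootScale_zero, hcl.closure_eq] at this

lemma contractibleSpace_PTheta (h0 : 0 ∈ PTheta d Θ) : ContractibleSpace (PTheta d Θ) := by
  have hmem {s : ℝ} (hs : 0 ≤ s) {a : Fin d → ℝ} (ha : a ∈ PTheta d Θ) :
      rootScale d s a ∈ PTheta d Θ := by
    rcases hs.eq_or_lt with rfl | hs
    · rwa [rootScale_zero]
    · exact rootScale_mem_PTheta ha hs
  refine (contractible_iff_id_nullhomotopic _).2 ⟨⟨0, h0⟩, ⟨⟨⟨fun p =>
    ⟨rootScale d (1 - p.1) p.2, hmem (sub_nonneg.2 p.1.2.2) p.2.2⟩, ?_⟩, fun a => ?_, fun a => ?_⟩⟩⟩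
  · exact ((continuous_rootScale d).comp ((continuous_const.sub
      (continuous_subtype_val.comp continuous_fst)).prodMk
      (continuous_subtype_val.comp continuous_snd))).subtype_mk _
  · simp [rootScale_one]
  · simp [rootScale_zero]

end PTheta

/-- If `Θ ⊆ Ω_{⟨d]}` contains the one-entry composition `(d)`, then
`𝒫_d^Θ` is contractible; in particular this holds for every nonempty closed `Θ`. -/
theorem statement0 (d : ℕ) (hd : 1 ≤ d) (Θ : Set (List ℕ)) (hΘ : Θ ⊆ OmegaLe d)
    (h : [d] ∈ Θ ∨ (Θ.Nonempty ∧ IsClosed (PTheta d Θ))) :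
    ContractibleSpace ↥(PTheta d Θ) := by
  refine contractibleSpace_PTheta ?_
  rcases h with hdΘ | ⟨⟨ω, hω⟩, hcl⟩
  · exact zero_mem_PTheta hd hdΘ
  · obtain ⟨a, ha⟩ := exists_hasPattern_monicPoly (hΘ hω)
    exact zero_mem_PTheta_of_isClosed hcl ⟨ω, hω, ha⟩
end

section
/- For every d ≥ 1, the graph 𝔊_d is connected, and its cycle rank (number of edges) − (number of vertices) + 1 equals d(d−2)/4 if d is even and (d−1)²/4 if d is odd; equivalently, 𝔊_d is homotopy equivalent to a wedge of that many circles. -/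
open Polynomial

/-- The vertex set of the graph `𝔊_d`: compositions in `Ω_{⟨d]}` with `|ω|' ≤ 1`. -/
def GdVert (d : ℕ) : Type := {ω : List ℕ // ω ∈ OmegaLe d ∧ ω.sum - ω.length ≤ 1}

/-- The graph `𝔊_d`: an edge joins two vertices exactly when one is obtained from the
other by a single merge or insertion operation. -/
def Gd (d : ℕ) : SimpleGraph (GdVert d) :=
  SimpleGraph.fromRel (fun v w => PatStep v.1 w.1)

/-!
Every vertex of `𝔊_d` is `(1^k)` or `(1^i, 2, 1^j)`, and since a step raises `|ω|′` by one, every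
edge joins a vertex of the first kind to one of the second: `(1^i, 2, 1^j)` is adjacent exactly to
`(1^(i+j))` (insertion) and `(1^(i+j+2))` (merge). Hence all vertices reach `(1^(d mod 2))`, there
are twice as many edges as vertices of the second kind, and the cycle rank is
`#(second kind) - #(first kind) + 1`. Passing from `d` to `d + 2` adds the `d + 1` vertices
`(1^i, 2, 1^j)` with `i + j = d` and the single vertex `(1^(d+2))`, so the rank grows by `d`,
exactly as `wedgeRank` does.
-/

section

open List

/-- The paper's `|ω|′ = |ω| - ℓ(ω)`, taken in `ℤ`. -/
def patCodim (ω : List ℕ) : ℤ := ω.sum - ω.length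

def comp2 (i j : ℕ) : List ℕ := replicate i 1 ++ 2 :: replicate j 1

@[simp] lemma sum_comp2 (i j : ℕ) : (comp2 i j).sum = i + j + 2 := by
  simp [comp2]; ring

@[simp] lemma length_comp2 (i j : ℕ) : (comp2 i j).length = i + j + 1 := by
  simp [comp2]; ring

@[simp] lemma patCodim_replicate_one (k : ℕ) : patCodim (replicate k 1) = 0 := by
  simp [patCodim]

@[simp] lemma patCodim_comp2 (i j : ℕ) : patCodim (comp2 i j) = 1 := by
  simp [patCodim]

lemma replicate_one_ne_comp2 (k i j : ℕ) : replicate k 1 ≠ comp2 i j := fun h => by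
  simpa using congrArg patCodim h

lemma comp2_injective {i j i' j' : ℕ} (h : comp2 i j = comp2 i' j') : i = i' ∧ j = j' := by
  induction i generalizing i' with
  | zero =>
    cases i' with
    | zero => simpa [comp2] using congrArg length h
    | succ n => simp [comp2, replicate_succ] at h
  | succ m ih =>
    cases i' with
    | zero => simp [comp2, replicate_succ] at h
    | succ n =>
      simp only [comp2, replicate_succ, cons_append, cons.injEq, true_and] at h
      exact ⟨congrArg (· + 1) (ih h).1, (ih h).2⟩

lemma eq_replicate_one_of_sum_le_length {ω : List ℕ} (hpos : ∀ m ∈ ω, 0 < m)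
    (h : ω.sum ≤ ω.length) : ω = replicate ω.length 1 := by
  induction ω with
  | nil => rfl
  | cons a t ih =>
    have ha := hpos a mem_cons_self
    have htpos : ∀ m ∈ t, 0 < m := fun m hm => hpos m (mem_cons_of_mem _ hm)
    have htlen := length_le_sum_of_one_le t htpos
    simp only [sum_cons, length_cons] at h
    rw [ih htpos (by omega), show a = 1 by omega]
    simp [replicate_succ]

lemma eq_replicate_one_or_comp2 {ω : List ℕ} (hpos : ∀ m ∈ ω, 0 < m)
    (h : ω.sum ≤ ω.length + 1) : (∃ k, ω = replicate k 1) ∨ ∃ i j, ω = comp2 i j := by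
  induction ω with
  | nil => exact Or.inl ⟨0, rfl⟩
  | cons a t ih =>
    have ha := hpos a mem_cons_self
    have htpos : ∀ m ∈ t, 0 < m := fun m hm => hpos m (mem_cons_of_mem _ hm)
    have htlen := length_le_sum_of_one_le t htpos
    simp only [sum_cons, length_cons] at h
    obtain rfl | rfl : a = 1 ∨ a = 2 := by omega
    · rcases ih htpos (by omega) with ⟨k, rfl⟩ | ⟨i, j, rfl⟩
      · exact Or.inl ⟨k + 1, rfl⟩
      · exact Or.inr ⟨i + 1, j, rfl⟩
    · rw [eq_replicate_one_of_sum_le_length htpos (by omega)]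
      exact Or.inr ⟨0, t.length, rfl⟩

lemma PatStep.sum_eq {ω ω' : List ℕ} (h : PatStep ω ω') :
    ω'.sum = ω.sum ∨ ω'.sum = ω.sum + 2 := by
  cases h with
  | merge => left; simp; ring
  | insert => right; simp; ring

lemma PatStep.patCodim_eq {ω ω' : List ℕ} (h : PatStep ω ω') :
    patCodim ω' = patCodim ω + 1 := by
  cases h <;> simp [patCodim] <;> ring

lemma PatStep.ne {ω ω' : List ℕ} (h : PatStep ω ω') : ω ≠ ω' := by
  rintro rfl
  simpa using h.patCodim_eq

lemma patStep_replicate_comp2_iff {k i j : ℕ} :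
    PatStep (replicate k 1) (comp2 i j) ↔ k = i + j ∨ k = i + j + 2 := by
  constructor
  · intro h
    have hcodim := congrArg (· + 1) h.patCodim_eq
    rcases h.sum_eq with h | h <;> simp at h hcodim ⊢ <;> omega
  · rintro (rfl | rfl)
    · simpa only [← replicate_add, comp2] using PatStep.insert (replicate i 1) (replicate j 1)
    · have := PatStep.merge (replicate i 1) (replicate j 1) 1 1
      rwa [show replicate i 1 ++ 1 :: 1 :: replicate j 1 = replicate (i + j + 2) 1 by
        rw [add_assoc, replicate_add]; rfl] at this

end

lemma wedgeRank_add_two (d : ℕ) : wedgeRank (d + 2) = wedgeRank d + d := by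
  rcases Nat.even_or_odd' d with ⟨c, rfl | rfl⟩
  · rw [wedgeRank, wedgeRank, if_pos ⟨c + 1, by ring⟩, if_pos (even_two_mul c)]
    rcases c with _ | c
    · rfl
    · have h : (2 * (c + 1) + 2) * (2 * (c + 1) + 2 - 2) =
          2 * (c + 1) * (2 * (c + 1) - 2) + 2 * (c + 1) * 4 := by
        rw [Nat.add_sub_cancel, show 2 * (c + 1) - 2 = 2 * c by omega]; ring
      rw [h, Nat.add_mul_div_right _ _ four_pos]
  · rw [wedgeRank, wedgeRank, if_neg (by simp [parity_simps]), if_neg (by simp [parity_simps])]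
    have h : (2 * c + 1 + 2 - 1) ^ 2 = (2 * c + 1 - 1) ^ 2 + (2 * c + 1) * 4 := by
      rw [Nat.add_sub_cancel, show 2 * c + 1 + 2 - 1 = 2 * c + 2 by omega]; ring
    rw [h, Nat.add_mul_div_right _ _ four_pos]

namespace Gd

open Finset

variable {d : ℕ}

/-- Lengths `k` of the vertices `(1^k)` of `𝔊_d`. -/
def onesIndex (d : ℕ) : Finset ℕ := {k ∈ range (d + 1) | k % 2 = d % 2}

/-- Pairs `(i, j)` of the vertices `(1^i, 2, 1^j)` of `𝔊_d`. -/
def comp2Index (d : ℕ) : Finset (ℕ × ℕ) :=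
  {p ∈ range d ×ˢ range d | p.1 + p.2 + 2 ≤ d ∧ (p.1 + p.2) % 2 = d % 2}

@[simp] lemma mem_onesIndex {k : ℕ} : k ∈ onesIndex d ↔ k ≤ d ∧ k % 2 = d % 2 := by
  simp [onesIndex]

@[simp] lemma mem_comp2Index {p : ℕ × ℕ} :
    p ∈ comp2Index d ↔ p.1 + p.2 + 2 ≤ d ∧ (p.1 + p.2) % 2 = d % 2 := by
  simp only [comp2Index, mem_filter, mem_product, mem_range]
  omega

lemma card_onesIndex_add_two (d : ℕ) : #(onesIndex (d + 2)) = #(onesIndex d) + 1 := by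
  have : onesIndex (d + 2) = insert (d + 2) (onesIndex d) := by
    ext k; simp; omega
  rw [this, card_insert_of_notMem (by simp)]

lemma card_comp2Index_add_two (d : ℕ) :
    #(comp2Index (d + 2)) = #(comp2Index d) + (d + 1) := by
  have : comp2Index (d + 2) = comp2Index d ∪ antidiagonal d := by
    ext p; simp; omega
  rw [this, card_union_of_disjoint, Nat.card_antidiagonal]
  exact disjoint_left.2 fun p hp => by simp at hp ⊢; omega

lemma card_comp2Index_add_one (d : ℕ) :
    #(comp2Index d) + 1 = #(onesIndex d) + wedgeRank d := by
  induction d using Nat.twoStepInduction with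
  | zero => rfl
  | one => rfl
  | more d ih _ =>
    rw [card_comp2Index_add_two, card_onesIndex_add_two, wedgeRank_add_two]
    omega

def onesVert (k : ℕ) (hk : k ∈ onesIndex d) : GdVert d :=
  ⟨List.replicate k 1, ⟨by simp, by simpa using mem_onesIndex.1 hk⟩, by simp⟩

def comp2Vert (p : ℕ × ℕ) (hp : p ∈ comp2Index d) : GdVert d :=
  ⟨comp2 p.1 p.2, ⟨fun m hm => by simp [comp2] at hm; omega,
    by simpa using mem_comp2Index.1 hp⟩, by simp⟩

def vertOfIndex : onesIndex d ⊕ comp2Index d → GdVert d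
  | .inl k => onesVert k.1 k.2
  | .inr p => comp2Vert p.1 p.2

lemma vertOfIndex_bijective : Function.Bijective (vertOfIndex (d := d)) := by
  constructor
  · rintro (⟨k, hk⟩ | ⟨p, hp⟩) (⟨k', hk'⟩ | ⟨p', hp'⟩) h <;>
      have h : (vertOfIndex _).1 = (vertOfIndex _).1 := congrArg Subtype.val h
    · simpa using List.replicate_left_injective 1 h
    · exact absurd h (replicate_one_ne_comp2 _ _ _)
    · exact absurd h.symm (replicate_one_ne_comp2 _ _ _)
    · obtain ⟨h1, h2⟩ := comp2_injective h
      simpa using Prod.ext h1 h2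
  · rintro ⟨ω, ⟨hpos, hle, hpar⟩, hcodim⟩
    rcases eq_replicate_one_or_comp2 hpos (by omega) with ⟨k, rfl⟩ | ⟨i, j, rfl⟩
    · exact ⟨.inl ⟨k, by simp_all⟩, rfl⟩
    · exact ⟨.inr ⟨(i, j), by simp at hle hpar ⊢; omega⟩, rfl⟩

lemma card_vert : Nat.card (GdVert d) = #(onesIndex d) + #(comp2Index d) := by
  rw [← Nat.card_eq_of_bijective _ vertOfIndex_bijective, Nat.card_sum,
    Nat.card_eq_finsetCard, Nat.card_eq_finsetCard]

lemma adj_iff {v w : GdVert d} : (Gd d).Adj v w ↔ PatStep v.1 w.1 ∨ PatStep w.1 v.1 := by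
  rw [Gd, SimpleGraph.fromRel_adj, and_iff_right_iff_imp]
  rintro (h | h) rfl <;> exact h.ne rfl

lemma patCodim_ne_of_adj {v w : GdVert d} (h : (Gd d).Adj v w) :
    patCodim v.1 ≠ patCodim w.1 := by
  rcases adj_iff.1 h with h | h <;> rw [h.patCodim_eq] <;> omega

lemma onesVert_adj_comp2Vert_iff {k : ℕ} {p : ℕ × ℕ} (hk : k ∈ onesIndex d)
    (hp : p ∈ comp2Index d) :
    (Gd d).Adj (onesVert k hk) (comp2Vert p hp) ↔ k = p.1 + p.2 ∨ k = p.1 + p.2 + 2 := by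
  rw [adj_iff, or_iff_left fun h => by simpa [onesVert, comp2Vert] using h.patCodim_eq]
  exact patStep_replicate_comp2_iff

lemma mod_two_mem_onesIndex (d : ℕ) : d % 2 ∈ onesIndex d := by
  simp; omega

lemma reachable_onesVert {k : ℕ} (hk : k ∈ onesIndex d) :
    (Gd d).Reachable (onesVert (d % 2) (mod_two_mem_onesIndex d)) (onesVert k hk) := by
  induction k using Nat.strong_induction_on with
  | _ k ih =>
    by_cases hk2 : k < 2
    · obtain rfl : k = d % 2 := by simp at hk; omega
      rfl
    · have hk' : k - 2 ∈ onesIndex d := by simp at hk ⊢; omega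
      have hp : (0, k - 2) ∈ comp2Index d := by simp at hk ⊢; omega
      have hins := (onesVert_adj_comp2Vert_iff hk' hp).2 (by simp)
      have hmerge := (onesVert_adj_comp2Vert_iff hk hp).2 (by simp; omega)
      exact (ih (k - 2) (by omega) hk').trans (hins.reachable.trans hmerge.reachable.symm)

theorem connected (d : ℕ) : (Gd d).Connected := by
  refine (Gd d).connected_iff_exists_forall_reachable.2
    ⟨onesVert _ (mod_two_mem_onesIndex d), fun v => ?_⟩
  obtain ⟨⟨k, hk⟩ | ⟨p, hp⟩, rfl⟩ := vertOfIndex_bijective.2 v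
  · exact reachable_onesVert hk
  · have hk : p.1 + p.2 ∈ onesIndex d := by simp at hp ⊢; omega
    have hins := (onesVert_adj_comp2Vert_iff hk hp).2 (.inl rfl)
    exact (reachable_onesVert hk).trans hins.reachable

lemma add_mem_onesIndex {p : ℕ × ℕ} (hp : p ∈ comp2Index d) (b : Bool) :
    p.1 + p.2 + 2 * b.toNat ∈ onesIndex d := by
  cases b <;> simp at hp ⊢ <;> omega

def edgeOfIndex (x : comp2Index d × Bool) : (Gd d).edgeSet :=
  ⟨s(onesVert _ (add_mem_onesIndex x.1.2 x.2), comp2Vert x.1.1 x.1.2),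
    (onesVert_adj_comp2Vert_iff (add_mem_onesIndex x.1.2 x.2) x.1.2).2
      (by cases x.2 <;> simp)⟩

lemma exists_edgeOfIndex {k : ℕ} {p : ℕ × ℕ} (hk : k ∈ onesIndex d) (hp : p ∈ comp2Index d)
    (h : (Gd d).Adj (onesVert k hk) (comp2Vert p hp)) :
    ∃ x, (edgeOfIndex x).1 = s(onesVert k hk, comp2Vert p hp) := by
  obtain ⟨b, rfl⟩ : ∃ b : Bool, k = p.1 + p.2 + 2 * b.toNat := by
    rcases (onesVert_adj_comp2Vert_iff hk hp).1 h with rfl | rfl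
    exacts [⟨false, rfl⟩, ⟨true, rfl⟩]
  exact ⟨(⟨p, hp⟩, b), rfl⟩

lemma edgeOfIndex_bijective : Function.Bijective (edgeOfIndex (d := d)) := by
  constructor
  · rintro ⟨⟨p, hp⟩, b⟩ ⟨⟨p', hp'⟩, b'⟩ h
    rcases Sym2.eq_iff.1 (congrArg Subtype.val h) with ⟨hones, hcomp2⟩ | ⟨h, -⟩
    · obtain ⟨h1, h2⟩ := comp2_injective (congrArg Subtype.val hcomp2)
      obtain rfl : p = p' := Prod.ext h1 h2
      have hlen := congrArg (List.length ∘ Subtype.val) hones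
      cases b <;> cases b' <;> simp [onesVert] at hlen ⊢
    · exact absurd (congrArg Subtype.val h) (replicate_one_ne_comp2 _ _ _)
  · rintro ⟨e, he⟩
    induction e using Sym2.ind with
    | _ v w =>
      obtain ⟨x, rfl⟩ := vertOfIndex_bijective.2 v
      obtain ⟨y, rfl⟩ := vertOfIndex_bijective.2 w
      have hcodim := patCodim_ne_of_adj he
      rcases x with ⟨k, hk⟩ | ⟨p, hp⟩ <;> rcases y with ⟨k', hk'⟩ | ⟨p', hp'⟩
      · simp [vertOfIndex, onesVert] at hcodim
      · obtain ⟨x, hx⟩ := exists_edgeOfIndex hk hp' he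
        exact ⟨x, Subtype.ext hx⟩
      · obtain ⟨x, hx⟩ := exists_edgeOfIndex hk' hp he.symm
        exact ⟨x, Subtype.ext (hx.trans Sym2.eq_swap)⟩
      · simp [vertOfIndex, comp2Vert] at hcodim

lemma card_edgeSet : Nat.card (Gd d).edgeSet = 2 * #(comp2Index d) := by
  rw [← Nat.card_eq_of_bijective _ edgeOfIndex_bijective, Nat.card_prod,
    Nat.card_eq_finsetCard, Nat.card_eq_fintype_card (α := Bool), Fintype.card_bool, mul_comm]

end Gd

theorem statement4_general (d : ℕ) :
    (Gd d).Connected ∧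
      Nat.card (Gd d).edgeSet + 1 = Nat.card (GdVert d) + wedgeRank d := by
  refine ⟨Gd.connected d, ?_⟩
  have hrank := Gd.card_comp2Index_add_one d
  rw [Gd.card_edgeSet, Gd.card_vert]
  omega

/-- `𝔊_d` is connected and its cycle rank
(#edges − #vertices + 1) equals `d(d−2)/4` for even `d` and `(d−1)²/4` for odd `d`
(stated without natural subtraction as #edges + 1 = #vertices + rank). -/
theorem statement4 (d : ℕ) (hd : 1 ≤ d) :
    (Gd d).Connected ∧
      Nat.card (Gd d).edgeSet + 1 = Nat.card (GdVert d) + wedgeRank d :=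
  statement4_general d
end

section
/- Let d ≥ 1 and let Θ ⊆ Ω_{⟨d]} be a closed set of compositions. Then the space 𝒫_{d+1}^{crit,cΘ} := {P ∈ 𝒫_{d+1} : (1/(d+1))·P′ ∈ 𝒫_d^{cΘ}}, i.e. the space of monic real polynomials of degree d+1 whose derivative's real root multiplicity pattern does not lie in Θ, is homotopy equivalent to 𝒫_d^{cΘ}. -/
open Polynomial

/-- `𝒫_{d+1}^{crit, cΘ}`: monic polynomials of degree `d+1` such that the monic
normalization `(1/(d+1))·P'` of the derivative lies in `𝒫_d^{cΘ}`, i.e. the real root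
multiplicity pattern of the derivative does not lie in `Θ`. -/
def critSet (d : ℕ) (Θ : Set (List ℕ)) : Set (Fin (d + 1) → ℝ) :=
  {b | ¬ ∃ ω ∈ Θ,
    HasPattern ((((d : ℝ) + 1)⁻¹) • Polynomial.derivative (monicPoly (d + 1) b)) ω}

/-!
Up to the factor `1/(d+1)`, differentiation `𝒫_{d+1} → 𝒫_d` is a linear surjection of
coefficient spaces that forgets the constant term, and it has a linear section (integration
with constant term `0`). Hence `𝒫_{d+1}^{crit,cΘ}` is the full preimage of `𝒫_d^{cΘ}`, and
the straight-line homotopy from "section ∘ projection" to the identity stays inside the fibres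
of the projection, so it restricts to the preimage of any set.
-/

section Linear

variable {E F : Type*} [AddCommGroup E] [Module ℝ E] [TopologicalSpace E]
  [IsTopologicalAddGroup E] [ContinuousSMul ℝ E] [AddCommGroup F] [Module ℝ F] [TopologicalSpace F]

noncomputable def ContinuousLinearMap.preimageHomotopyEquiv (π : E →L[ℝ] F) (σ : F →L[ℝ] E)
    (hπσ : ∀ y, π (σ y) = y) (S : Set F) : ContinuousMap.HomotopyEquiv ↥(π ⁻¹' S) ↥S where
  toFun := ⟨fun x => ⟨π x, x.2⟩, by fun_prop⟩
  invFun := ⟨fun y => ⟨σ y, by simp [Set.mem_preimage, hπσ, y.2]⟩, by fun_prop⟩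
  left_inv := ⟨{
    toFun := fun p => ⟨(1 - (p.1 : ℝ)) • σ (π p.2) + (p.1 : ℝ) • p.2.1, by
      rw [Set.mem_preimage, map_add, map_smul, map_smul, hπσ, ← add_smul, sub_add_cancel,
        one_smul]
      exact p.2.2⟩
    continuous_toFun := by fun_prop
    map_zero_left := fun x => by simp
    map_one_left := fun x => by simp }⟩
  right_inv := by
    convert ContinuousMap.Homotopic.refl _
    ext y
    simp [hπσ]

end Linear

noncomputable def derivCoeffs (d : ℕ) : (Fin (d + 1) → ℝ) →L[ℝ] (Fin d → ℝ) :=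
  ContinuousLinearMap.pi fun i =>
    (((i : ℝ) + 1) / ((d : ℝ) + 1)) • ContinuousLinearMap.proj i.succ

noncomputable def antiderivCoeffs (d : ℕ) : (Fin d → ℝ) →L[ℝ] (Fin (d + 1) → ℝ) :=
  ContinuousLinearMap.pi <| Fin.cons 0 fun i =>
    (((d : ℝ) + 1) / ((i : ℝ) + 1)) • ContinuousLinearMap.proj i

lemma derivCoeffs_apply (d : ℕ) (b : Fin (d + 1) → ℝ) (i : Fin d) :
    derivCoeffs d b i = ((i : ℝ) + 1) / ((d : ℝ) + 1) * b i.succ := rfl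

lemma derivCoeffs_antiderivCoeffs (d : ℕ) (a : Fin d → ℝ) :
    derivCoeffs d (antiderivCoeffs d a) = a := by
  ext i
  simp only [derivCoeffs_apply, antiderivCoeffs, ContinuousLinearMap.coe_pi', Fin.cons_succ,
    smul_apply, ContinuousLinearMap.proj_apply, smul_eq_mul]
  field_simp

lemma inv_smul_derivative_monicPoly (d : ℕ) (b : Fin (d + 1) → ℝ) :
    ((d : ℝ) + 1)⁻¹ • derivative (monicPoly (d + 1) b) = monicPoly d (derivCoeffs d b) := by
  have hd : ((d : ℝ) + 1) ≠ 0 := by positivity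
  simp only [monicPoly, derivative_add, derivative_X_pow, derivative_sum, derivative_C_mul,
    Fin.sum_univ_succ, Fin.val_zero, pow_zero, derivative_one, mul_zero, zero_add,
    Fin.val_succ, add_tsub_cancel_right, derivCoeffs_apply, smul_add, Finset.smul_sum,
    smul_eq_C_mul]
  congr 1
  · rw [← mul_assoc, ← C_mul]
    push_cast
    rw [inv_mul_cancel₀ hd, C_1, one_mul]
  · refine Finset.sum_congr rfl fun i _ => ?_
    rw [← mul_assoc, ← mul_assoc, ← C_mul, ← C_mul]
    congr 2
    push_cast
    field_simp

lemma critSet_eq_preimage (d : ℕ) (Θ : Set (List ℕ)) :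
    critSet d Θ = derivCoeffs d ⁻¹' PcTheta d Θ := by
  ext b
  simp only [critSet, PcTheta, PTheta, Set.mem_ofPred_eq, Set.mem_preimage, Set.mem_compl_iff,
    inv_smul_derivative_monicPoly]

theorem statement16_general (d : ℕ) (Θ : Set (List ℕ)) :
    Nonempty (ContinuousMap.HomotopyEquiv ↥(critSet d Θ) ↥(PcTheta d Θ)) := by
  rw [critSet_eq_preimage]
  exact ⟨(derivCoeffs d).preimageHomotopyEquiv (antiderivCoeffs d)
    (derivCoeffs_antiderivCoeffs d) _⟩

/-- For any closed `Θ ⊆ Ω_{⟨d]}`, the space `𝒫_{d+1}^{crit,cΘ}` is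
homotopy equivalent to `𝒫_d^{cΘ}`. -/
theorem statement16 (d : ℕ) (hd : 1 ≤ d) (Θ : Set (List ℕ)) (hΘ : Θ ⊆ OmegaLe d)
    (hcl : IsClosed (PTheta d Θ)) :
    Nonempty (ContinuousMap.HomotopyEquiv ↥(critSet d Θ) ↥(PcTheta d Θ)) :=
  statement16_general d Θ
end
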